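/- Let (P, X) be an alternating non-crossing partition of [m'] ∪ [m]. Then every arc of Z_{2m} lies in Σⁿ U_{(P,X)} for some n ∈ ℤ if and only if P has the single block {1', …, m'} and x_p ≠ p⁺ for every p ∈ [m]. -/
import Mathlib


namespace PY

/-! ### The ∞-gon `Z_{2m}`

Labels are elements of `Fin (2 * m)`, ordered `1' < 1 < 2' < 2 < ⋯ < m' < m`:
the label `2 * i` is the primed (accumulation-point) label `(i+1)'` and the label
`2 * i + 1` is the unprimed label `i + 1`.  A point of `Z_{2m}` is a pair of a label and
an integer. -/

/-- Points of the ∞-gon `Z_{2m}`: a label and an integer. -/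
abbrev Pt (m : ℕ) := Fin (2 * m) × ℤ

/-- Cyclic successor of a label. -/
def cycSucc {n : ℕ} (r : Fin n) : Fin n := ⟨(r.1 + 1) % n, Nat.mod_lt _ r.pos⟩

/-- Cyclic predecessor of a label. -/
def cycPred {n : ℕ} (r : Fin n) : Fin n := ⟨(r.1 + (n - 1)) % n, Nat.mod_lt _ r.pos⟩

/-- Strict lexicographic order on the points of `Z_{2m}`. -/
def ptLt {m : ℕ} (a b : Pt m) : Prop := a.1 < b.1 ∨ (a.1 = b.1 ∧ a.2 < b.2)

/-- `sort2 a b` is the pair `(a, b)` arranged in (weakly) increasing lexicographic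
order; it realizes the notation `|a, b|` for the arc connecting two points. -/
def sort2 {m : ℕ} (a b : Pt m) : Pt m × Pt m :=
  if a.1 < b.1 ∨ (a.1 = b.1 ∧ a.2 ≤ b.2) then (a, b) else (b, a)

/-- An ordered pair of points of `Z_{2m}` is an arc when its endpoints are in increasing
lexicographic order and, if they lie in the same copy of `ℤ`, differ by at least `2`. -/
def IsArc {m : ℕ} (x : Pt m × Pt m) : Prop :=
  ptLt x.1 x.2 ∧ (x.1.1 = x.2.1 → x.1.2 + 2 ≤ x.2.2)

/-- The precovering conditions (PC conditions) for a set of arcs of `Z_{2m}`. -/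
structure PCcond {m : ℕ} (U : Set (Pt m × Pt m)) : Prop where
  pc1 : ∀ p q : Fin (2 * m), p ≠ q → ∀ x1 x2 : ℕ → ℤ, StrictMono x1 → StrictMono x2 →
    (∀ n, ((p, x1 n), (q, x2 n)) ∈ U) →
    ∃ y1 y2 : ℕ → ℤ, StrictAnti y1 ∧ StrictAnti y2 ∧
      ∀ n, sort2 (cycSucc p, y1 n) (cycSucc q, y2 n) ∈ U
  pc2 : ∀ p q : Fin (2 * m), p ≠ cycSucc q → ∀ x1 x2 : ℕ → ℤ,
    StrictAnti x1 → StrictMono x2 →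
    (∀ n, ((p, x1 n), (q, x2 n)) ∈ U) →
    ∃ y1 y2 : ℕ → ℤ, StrictAnti y1 ∧ StrictAnti y2 ∧
      ∀ n, sort2 (p, y1 n) (cycSucc q, y2 n) ∈ U
  pc2' : ∀ p q : Fin (2 * m), q ≠ cycSucc p → p ≠ q → ∀ x1 x2 : ℕ → ℤ,
    StrictMono x1 → StrictAnti x2 →
    (∀ n, ((p, x1 n), (q, x2 n)) ∈ U) →
    ∃ y1 y2 : ℕ → ℤ, StrictAnti y1 ∧ StrictAnti y2 ∧
      ∀ n, sort2 (cycSucc p, y1 n) (q, y2 n) ∈ U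
  pc3 : ∀ p q : Fin (2 * m), ∀ (x1 : ℤ) (x2 : ℕ → ℤ), StrictMono x2 →
    (∀ n, ((p, x1), (q, x2 n)) ∈ U) →
    ∃ y2 : ℕ → ℤ, StrictAnti y2 ∧ ∀ n, sort2 (p, x1) (cycSucc q, y2 n) ∈ U
  pc3' : ∀ p q : Fin (2 * m), p ≠ q → ∀ (x1 : ℕ → ℤ) (x2 : ℤ), StrictMono x1 →
    (∀ n, ((p, x1 n), (q, x2)) ∈ U) →
    ∃ y1 : ℕ → ℤ, StrictAnti y1 ∧ ∀ n, sort2 (cycSucc p, y1 n) (q, x2) ∈ U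

/-- A point is admissible for the subcategory `A`: its label is unprimed, or it is a
point `(q, n)` of a primed copy with `n ≤ z0`. -/
def memA {m : ℕ} (z0 : ℤ) (a : Pt m) : Prop :=
  a.1.1 % 2 = 1 ∨ (a.1.1 % 2 = 0 ∧ a.2 ≤ z0)

/-- The set of arcs `A` determined by the choice of `z0`. -/
def setA (m : ℕ) (z0 : ℤ) : Set (Pt m × Pt m) :=
  {x | memA z0 x.1 ∧ memA z0 x.2}

/-! ### Decorations

The linearly ordered set `{p} ∪ Z^(p) ∪ {p⁺}` is modelled as `WithBot (WithTop ℤ)`: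
`⊥` is the accumulation point `p`, an integer `n` is the point `n` of `Z^(p)`, and the
top element is the accumulation point `p⁺`. -/

/-- The linearly ordered set `{p} ∪ Z^(p) ∪ {p⁺}`. -/
abbrev Dm := WithBot (WithTop ℤ)

/-- An integer, viewed in `{p} ∪ Z^(p) ∪ {p⁺}`. -/
def toDm (n : ℤ) : Dm := ((n : WithTop ℤ) : Dm)

/-- The element `p⁺` of `{p} ∪ Z^(p) ∪ {p⁺}`. -/
def topDm : Dm := ((⊤ : WithTop ℤ) : Dm)

/-- The unprimed label `p ∈ [m]` with index `i`. -/
def unpr {m : ℕ} (i : Fin m) : Fin (2 * m) := ⟨2 * i.1 + 1, by have := i.2; omega⟩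

/-- The primed label `p' ∈ [m']` with index `i`. -/
def prim {m : ℕ} (i : Fin m) : Fin (2 * m) := ⟨2 * i.1, by have := i.2; omega⟩

/-- Four points of `Fin n` (viewed on a circle with its natural cyclic order) are in
(strict, anticlockwise) cyclic order. -/
def Cyc4 {n : ℕ} (a b c d : Fin n) : Prop :=
  (a < b ∧ b < c ∧ c < d) ∨ (b < c ∧ c < d ∧ d < a) ∨
  (c < d ∧ d < a ∧ a < b) ∨ (d < a ∧ a < b ∧ b < c)

/-- A partition (setoid) of `Fin n` is non-crossing if there are no elements
`i1, j1, i2, j2` in cyclic order with `i1, i2` in one block and `j1, j2` in a different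
block. -/
def IsNoncrossing {n : ℕ} (P : Setoid (Fin n)) : Prop :=
  ∀ i1 j1 i2 j2 : Fin n, Cyc4 i1 j1 i2 j2 → P.r i1 i2 → P.r j1 j2 → P.r i1 j1

/-! ### Alternating non-crossing partitions and the arc sets `U_{(P,X)}` -/

/-- A point of `Z_{2m}` belongs to the interval `[x_{p⁻}, p⁺)` attached to the primed
label `p' ∈ [m']` of index `j`: it lies in the primed copy `Z^(p)`, or in the unprimed
copy `Z^(p⁻)` above the decoration `x_{p⁻}`. -/
def altRegion {m : ℕ} (x : Fin m → Dm) (j : Fin m) (a : Pt m) : Prop :=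
  a.1 = prim j ∨ (a.1 = unpr (cycPred j) ∧ x (cycPred j) ≤ toDm a.2)

/-- The set of arcs `U_{(P,X)}` associated with an alternating non-crossing partition
`(P, X)`: arcs both of whose endpoints lie in `⋃_{p ∈ B} [x_{p⁻}, p⁺)` for a single
block `B` of `P`. -/
def altU {m : ℕ} (P : Setoid (Fin m)) (x : Fin m → Dm) : Set (Pt m × Pt m) :=
  {a | IsArc a ∧ ∃ b : Fin m,
    (∃ j, P.r b j ∧ altRegion x j a.1) ∧ (∃ j, P.r b j ∧ altRegion x j a.2)}

end PY

namespace PY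

/-- The shift `Σⁿ` on arcs: it subtracts `n` from both integer coordinates and keeps the
labels. -/
def shiftArc {m : ℕ} (n : ℤ) (a : Pt m × Pt m) : Pt m × Pt m :=
  ((a.1.1, a.1.2 - n), (a.2.1, a.2.2 - n))

end PY

/-!
STATEMENT 16: Let (P, X) be an alternating non-crossing partition of [m'] ∪ [m]. Then
every arc of Z_{2m} lies in Σⁿ U_{(P,X)} for some n ∈ ℤ if and only if P has the single
block {1', …, m'} and x_p ≠ p⁺ for every p ∈ [m].
-/

namespace PYAux
open PY

lemma prim_inj {m : ℕ} {i j : Fin m} (h : prim i = prim j) : i = j := by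
  have := congrArg Fin.val h
  simp [prim] at this
  exact Fin.ext this

lemma unpr_inj {m : ℕ} {i j : Fin m} (h : unpr i = unpr j) : i = j := by
  have := congrArg Fin.val h
  simp [unpr] at this
  exact Fin.ext this

lemma prim_ne_unpr {m : ℕ} (i k : Fin m) : prim i ≠ unpr k := by
  intro h
  have := congrArg Fin.val h
  simp [prim, unpr] at this
  omega

lemma cycPred_cycSucc {m : ℕ} (hm : 0 < m) (i : Fin m) : cycPred (cycSucc i) = i := by
  have hi := i.2
  apply Fin.ext
  show ((i.1 + 1) % m + (m - 1)) % m = i.1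
  rw [Nat.mod_add_mod]
  have : i.1 + 1 + (m - 1) = i.1 + m := by omega
  rw [this, Nat.add_mod_right, Nat.mod_eq_of_lt hi]

lemma topDm_eq : topDm = (⊤ : Dm) := rfl

lemma toDm_ne_top (z : ℤ) : toDm z ≠ (⊤ : Dm) := by
  simp [toDm]

lemma le_toDm_of_ne_top (v : Dm) (hv : v ≠ topDm) :
    ∃ N : ℤ, ∀ w : ℤ, N ≤ w → v ≤ toDm w := by
  induction v using WithBot.recBotCoe with
  | bot => exact ⟨0, fun w _ => bot_le⟩
  | coe t =>
    induction t using WithTop.recTopCoe with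
    | top => exact absurd rfl hv
    | coe k =>
      refine ⟨k, fun w hw => ?_⟩
      show ((k : WithTop ℤ) : Dm) ≤ ((w : WithTop ℤ) : Dm)
      exact_mod_cast hw

lemma region_exists {m : ℕ} (hm : 0 < m) (x : Fin m → Dm) (hx : ∀ i, x i ≠ topDm)
    (r : Fin (2 * m)) : ∃ N : ℤ, ∀ z : ℤ, N ≤ z → ∃ j : Fin m, altRegion x j (r, z) := by
  have hr := r.2
  rcases Nat.even_or_odd r.1 with ⟨k, hk⟩ | ⟨k, hk⟩
  · refine ⟨0, fun z _ => ⟨⟨k, by omega⟩, Or.inl (Fin.ext ?_)⟩⟩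
    show r.1 = 2 * k
    omega
  · obtain ⟨N, hN⟩ := le_toDm_of_ne_top (x ⟨k, by omega⟩) (hx _)
    refine ⟨N, fun z hz => ⟨cycSucc ⟨k, by omega⟩, Or.inr ⟨?_, ?_⟩⟩⟩
    · rw [cycPred_cycSucc hm]
      apply Fin.ext
      show r.1 = 2 * k + 1
      omega
    · rw [cycPred_cycSucc hm]
      exact hN z hz

end PYAux
open PYAux in
open PY in
theorem arcs_in_some_shift_of_altU_iff
    (m : ℕ) (hm : 0 < m)
    (P : Setoid (Fin m)) (x : Fin m → Dm) (hP : IsNoncrossing P) :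
    (∀ a : Pt m × Pt m, IsArc a →
        ∃ (n : ℤ) (u : Pt m × Pt m), u ∈ altU P x ∧ a = shiftArc n u) ↔
      ((∀ i j : Fin m, P.r i j) ∧ ∀ i : Fin m, x i ≠ topDm) := by
  constructor
  · intro h
    constructor
    · -- P is the full relation
      have key : ∀ i j : Fin m, i < j → P.r i j := by
        intro i j hij
        have hlt : (prim i : Fin (2 * m)) < prim j := by
          simp only [prim, Fin.lt_def]
          omega
        obtain ⟨n, u, ⟨_, b, ⟨j1, hbj1, hr1⟩, ⟨j2, hbj2, hr2⟩⟩, heq⟩ :=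
          h ((prim i, 0), (prim j, 0))
            ⟨Or.inl hlt, fun hpq => absurd hpq (ne_of_lt hlt)⟩
        have h1 : (prim i : Fin (2 * m)) = u.1.1 := congrArg (fun t => t.1.1) heq
        have h2 : (prim j : Fin (2 * m)) = u.2.1 := congrArg (fun t => t.2.1) heq
        have hri : P.r b i := by
          rcases hr1 with hl | ⟨hl, _⟩
          · rw [← prim_inj (h1.trans hl)] at hbj1; exact hbj1
          · exact absurd (h1.trans hl) (prim_ne_unpr _ _)
        have hrj : P.r b j := by
          rcases hr2 with hl | ⟨hl, _⟩
          · rw [← prim_inj (h2.trans hl)] at hbj2; exact hbj2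
          · exact absurd (h2.trans hl) (prim_ne_unpr _ _)
        exact P.trans (P.symm hri) hrj
      intro i j
      rcases lt_trichotomy i j with hij | rfl | hij
      · exact key i j hij
      · exact P.refl i
      · exact P.symm (key j i hij)
    · -- no decoration is ⊤
      intro i hxi
      obtain ⟨n, u, ⟨_, b, ⟨j1, hbj1, hr1⟩, _⟩, heq⟩ :=
        h ((unpr i, 0), (unpr i, 2))
          ⟨Or.inr ⟨rfl, by norm_num⟩, fun _ => by norm_num⟩
      have h1 : (unpr i : Fin (2 * m)) = u.1.1 := congrArg (fun t => t.1.1) heq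
      rcases hr1 with hl | ⟨hl, hle⟩
      · exact absurd (h1.trans hl).symm (prim_ne_unpr _ _)
      · rw [← unpr_inj (h1.trans hl)] at hle
        rw [hxi, topDm_eq, top_le_iff] at hle
        exact toDm_ne_top _ hle
  · rintro ⟨hfull, hx⟩ ⟨⟨p, z1⟩, ⟨q, z2⟩⟩ ha
    obtain ⟨N1, h1⟩ := region_exists hm x hx p
    obtain ⟨N2, h2⟩ := region_exists hm x hx q
    set n : ℤ := max (N1 - z1) (N2 - z2) with hn
    obtain ⟨j1, hj1⟩ := h1 (z1 + n) (by omega)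
    obtain ⟨j2, hj2⟩ := h2 (z2 + n) (by omega)
    refine ⟨n, ((p, z1 + n), (q, z2 + n)),
      ⟨⟨?_, ?_⟩, j1, ⟨j1, P.refl j1, hj1⟩, ⟨j2, hfull j1 j2, hj2⟩⟩, ?_⟩
    · rcases ha.1 with hl | ⟨hl, hlt⟩
      · exact Or.inl hl
      · exact Or.inr ⟨hl, by dsimp only at hlt ⊢; omega⟩
    · intro hpq
      have h2' := ha.2 hpq
      dsimp only at h2' ⊢
      omega
    · simp [shiftArc]
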